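/- arXiv:2109.03338 — 4 statements merged into one kernel-verified Lean document; each statement's English description precedes it below -/
import Mathlib

section
/- The matrix A_e annihilates N, i.e., A_e * N = 0 (so every column of N lies in the kernel of A_e). -/
open Matrix

/-- The MPC equality-constraint matrix `A_e ∈ ℝ^{T·n_x × 2T·n_x}`, viewed block-wise.
Variables are ordered as `(u(0), x(1), u(1), x(2), …, u(T−1), x(T))`: the variable
column block `(s, 0)` corresponds to `u(s)` and `(s, 1)` corresponds to `x(s+1)`.
Block row `t` has `−B` in the `u(t)` column block, `I` in the `x(t+1)` column block,
and (for `t ≥ 1`) `−A` in the `x(t)` column block; all other blocks are zero. -/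
noncomputable def AeMat (T nx : ℕ) (A B : Matrix (Fin nx) (Fin nx) ℝ) :
    Matrix (Fin T × Fin nx) ((Fin T × Fin 2) × Fin nx) ℝ :=
  fun p q =>
    (if q.1.1 = p.1 ∧ q.1.2 = 0 then (-B) p.2 q.2 else 0) +
    (if q.1.1 = p.1 ∧ q.1.2 = 1 then (1 : Matrix (Fin nx) (Fin nx) ℝ) p.2 q.2 else 0) +
    (if ((q.1.1 : ℕ) + 1 = (p.1 : ℕ)) ∧ q.1.2 = 1 then (-A) p.2 q.2 else 0)

/-- The sparse null-space basis `N ∈ ℝ^{2T·n_x × T·n_x}`, viewed block-wise.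
Column block `k` has `I` in the `u(k)` row block `(k, 0)`, `B` in the `x(k+1)` row
block `(k, 1)`, and (for `k ≤ T−2`) `C = −B⁻¹AB` in the `u(k+1)` row block
`(k+1, 0)`; all other blocks are zero. -/
noncomputable def NMat (T nx : ℕ) (A B : Matrix (Fin nx) (Fin nx) ℝ) :
    Matrix ((Fin T × Fin 2) × Fin nx) (Fin T × Fin nx) ℝ :=
  fun p q =>
    (if p.1.1 = q.1 ∧ p.1.2 = 0 then (1 : Matrix (Fin nx) (Fin nx) ℝ) p.2 q.2 else 0) +
    (if p.1.1 = q.1 ∧ p.1.2 = 1 then B p.2 q.2 else 0) +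
    (if ((p.1.1 : ℕ) = (q.1 : ℕ) + 1) ∧ p.1.2 = 0 then (-(B⁻¹ * A * B)) p.2 q.2 else 0)

/-!
Work block-wise: `A_e` and `N` are block matrices with blocks in the ring of `n_x × n_x`
matrices, and the product of block matrices is the block matrix of the products. Block row
`t` of `A_e` against block column `k` of `N` gives `-B + B = 0` when `t = k`, and
`-B C - A B = 0` when `t = k + 1`, because `B C = -A B`; by sparsity nothing else survives.
-/

theorem Matrix.comp_mul {I J L K R : Type*} [Fintype J] [Fintype K]
    [NonUnitalNonAssocSemiring R] (X : Matrix I J (Matrix K K R))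
    (Y : Matrix J L (Matrix K K R)) :
    comp I J K K R X * comp J L K K R Y = comp I L K K R (X * Y) := by
  ext ⟨i, k⟩ ⟨l, n⟩
  simp only [comp_apply, mul_apply, sum_apply, Fintype.sum_prod_type]

section Blocks

variable {R : Type*} [Ring R] (T : ℕ)

def constraintBlocks (a b : R) : Matrix (Fin T) (Fin T × Fin 2) R := fun t q =>
  (if q.1 = t ∧ q.2 = 0 then -b else 0) + (if q.1 = t ∧ q.2 = 1 then 1 else 0) +
    (if (q.1 : ℕ) + 1 = t ∧ q.2 = 1 then -a else 0)

def nullSpaceBlocks (b c : R) : Matrix (Fin T × Fin 2) (Fin T) R := fun p k =>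
  (if p.1 = k ∧ p.2 = 0 then 1 else 0) + (if p.1 = k ∧ p.2 = 1 then b else 0) +
    (if (p.1 : ℕ) = k + 1 ∧ p.2 = 0 then c else 0)

theorem constraintBlocks_mul_nullSpaceBlocks_apply (a b c : R) (t k : Fin T) :
    (constraintBlocks T a b * nullSpaceBlocks T b c) t k =
      if (t : ℕ) = k + 1 then -(a * b + b * c) else 0 := by
  simp only [mul_apply, Fintype.sum_prod_type, Fin.sum_univ_two, constraintBlocks, nullSpaceBlocks,
    and_true, and_false, zero_ne_one, one_ne_zero, Fin.isValue, if_false, add_zero, zero_add,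
    ite_mul, zero_mul, mul_ite, mul_zero, Finset.sum_add_distrib, Finset.sum_ite_eq',
    Finset.mem_univ, if_true]
  by_cases hkt : k = t
  · subst hkt
    simp
  · have htk : t ≠ k := Ne.symm hkt
    simp only [hkt, htk, if_false, zero_add, eq_comm (a := (k : ℕ) + 1)]
    split_ifs <;> noncomm_ring

theorem constraintBlocks_mul_nullSpaceBlocks_eq_zero {a b c : R} (h : a * b + b * c = 0) :
    constraintBlocks T a b * nullSpaceBlocks T b c = 0 := by
  ext1 t k
  simp [constraintBlocks_mul_nullSpaceBlocks_apply, h]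

end Blocks

theorem AeMat_eq_comp (T nx : ℕ) (A B : Matrix (Fin nx) (Fin nx) ℝ) :
    AeMat T nx A B = comp _ _ _ _ ℝ (constraintBlocks T A B) := by
  ext
  simp only [AeMat, constraintBlocks, comp_apply, Matrix.add_apply]
  split_ifs <;> rfl

theorem NMat_eq_comp (T nx : ℕ) (A B : Matrix (Fin nx) (Fin nx) ℝ) :
    NMat T nx A B = comp _ _ _ _ ℝ (nullSpaceBlocks T B (-(B⁻¹ * A * B))) := by
  ext
  simp only [NMat, nullSpaceBlocks, comp_apply, Matrix.add_apply]
  split_ifs <;> rfl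

theorem Ae_mul_N_eq_zero_general (T nx : ℕ)
    (A B : Matrix (Fin nx) (Fin nx) ℝ) (hB : IsUnit B) :
    AeMat T nx A B * NMat T nx A B = 0 := by
  have hBC : A * B + B * -(B⁻¹ * A * B) = 0 := by
    rw [Matrix.mul_neg, Matrix.mul_assoc,
      mul_nonsing_inv_cancel_left _ _ ((isUnit_iff_isUnit_det B).mp hB), add_neg_cancel]
  rw [AeMat_eq_comp, NMat_eq_comp, comp_mul, constraintBlocks_mul_nullSpaceBlocks_eq_zero T hBC]
  rfl

/-- The matrix `A_e` annihilates `N`, i.e. `A_e * N = 0`, so every column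
of `N` lies in the kernel of `A_e`. -/
theorem Ae_mul_N_eq_zero (T nx : ℕ) (hT : 1 ≤ T) (hnx : 1 ≤ nx)
    (A B : Matrix (Fin nx) (Fin nx) ℝ) (hB : IsUnit B) :
    AeMat T nx A B * NMat T nx A B = 0 :=
  Ae_mul_N_eq_zero_general T nx A B hB
end

section
/- The columns of N form a basis of the kernel of A_e: the column space of N equals the null space {y ∈ ℝ^{2T·n_x} : A_e y = 0}, which has dimension T·n_x. -/
/-!
Write `y = (u, x)` blockwise. Row `t` of `A_e y` is `−B u(t) + x(t+1) − A x(t)`, and `N v` has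
`u`-blocks `v(t) + C v(t−1)` and `x`-blocks `B v(t)`; since `B C = −A B` the shifted terms cancel,
so `A_e N = 0`. The `x`-blocks show that `N` is injective, and `u = −B⁻¹ w`, `x = 0` solves
`A_e y = w`, so `A_e` is onto. Rank–nullity then gives `dim ker A_e = 2T n_x − T n_x = rank N`.
-/

open Matrix

section Blocks

variable {T nx : ℕ}

/-- `z (t - 1)`, and `0` at `t = 0`; written as a sum to avoid subtraction in `Fin T`. -/
def prevBlock {E : Type*} [AddCommMonoid E] (z : Fin T → E) (t : Fin T) : E :=
  ∑ s : Fin T, if (s : ℕ) + 1 = t then z s else 0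

theorem mulVec_prevBlock {R n : Type*} [Semiring R] [Fintype n] (M : Matrix n n R)
    (z : Fin T → n → R) (t : Fin T) :
    M *ᵥ prevBlock z t = prevBlock (fun s => M *ᵥ z s) t := by
  simp only [prevBlock, mulVec_sum, apply_ite (M *ᵥ ·), mulVec_zero]

theorem prevBlock_neg {E : Type*} [AddCommGroup E] (z : Fin T → E) (t : Fin T) :
    prevBlock (fun s => -z s) t = -prevBlock z t := by
  simp only [prevBlock, ← Finset.sum_neg_distrib, apply_ite (Neg.neg : E → E), neg_zero]

def inputBlock (y : (Fin T × Fin 2) × Fin nx → ℝ) (t : Fin T) : Fin nx → ℝ :=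
  fun i => y ((t, 0), i)

def stateBlock (y : (Fin T × Fin 2) × Fin nx → ℝ) (t : Fin T) : Fin nx → ℝ :=
  fun i => y ((t, 1), i)

variable (A B : Matrix (Fin nx) (Fin nx) ℝ)

theorem curry_AeMat_mulVec (y : (Fin T × Fin 2) × Fin nx → ℝ) (t : Fin T) :
    Function.curry (AeMat T nx A B *ᵥ y) t =
      -B *ᵥ inputBlock y t + stateBlock y t + prevBlock (fun s => -A *ᵥ stateBlock y s) t := by
  ext i
  simp [AeMat, prevBlock, inputBlock, stateBlock, mulVec, dotProduct, Fintype.sum_prod_type,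
    add_mul, ite_mul, Finset.sum_add_distrib, one_apply, apply_ite (fun f : Fin nx → ℝ => f i)]

theorem inputBlock_NMat_mulVec (v : Fin T × Fin nx → ℝ) (t : Fin T) :
    inputBlock (NMat T nx A B *ᵥ v) t =
      Function.curry v t + prevBlock (fun s => -(B⁻¹ * A * B) *ᵥ Function.curry v s) t := by
  ext i
  simp [NMat, prevBlock, inputBlock, mulVec, dotProduct, Fintype.sum_prod_type, add_mul, ite_mul,
    Finset.sum_add_distrib, one_apply, apply_ite (fun f : Fin nx → ℝ => f i),
    eq_comm (a := (t : ℕ))]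

theorem stateBlock_NMat_mulVec (v : Fin T × Fin nx → ℝ) (t : Fin T) :
    stateBlock (NMat T nx A B *ᵥ v) t = B *ᵥ Function.curry v t := by
  ext i
  simp [NMat, stateBlock, mulVec, dotProduct, Fintype.sum_prod_type, ite_mul]

end Blocks

section NullSpace

variable {T nx : ℕ} {A B : Matrix (Fin nx) (Fin nx) ℝ}

theorem AeMat_mulVec_NMat_mulVec (hB : IsUnit B) (v : Fin T × Fin nx → ℝ) :
    AeMat T nx A B *ᵥ (NMat T nx A B *ᵥ v) = 0 := by
  have hBC : -B * -(B⁻¹ * A * B) = A * B := by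
    rw [neg_mul_neg, ← Matrix.mul_assoc, ← Matrix.mul_assoc,
      mul_nonsing_inv B ((isUnit_iff_isUnit_det B).mp hB), Matrix.one_mul]
  refine Function.curry_injective (funext fun t => ?_)
  show _ = (0 : Fin nx → ℝ)
  rw [curry_AeMat_mulVec, inputBlock_NMat_mulVec, mulVec_add, mulVec_prevBlock]
  simp only [stateBlock_NMat_mulVec, mulVec_mulVec, hBC]
  simp only [neg_mul, neg_mulVec, prevBlock_neg]
  abel

theorem NMat_mulVec_injective (hB : IsUnit B) :
    Function.Injective (NMat T nx A B *ᵥ ·) := by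
  intro v w hvw
  ext ⟨t, i⟩
  have hstate := congrArg (stateBlock · t) hvw
  simp only [stateBlock_NMat_mulVec] at hstate
  exact congrFun (mulVec_injective_iff_isUnit.mpr hB hstate) i

theorem AeMat_mulVec_surjective (hB : IsUnit B) :
    Function.Surjective (AeMat T nx A B *ᵥ ·) := by
  intro w
  let y : (Fin T × Fin 2) × Fin nx → ℝ := fun q =>
    if q.1.2 = 0 then (-B⁻¹ *ᵥ Function.curry w q.1.1) q.2 else 0
  have hu : inputBlock y = fun t => -B⁻¹ *ᵥ Function.curry w t := rfl
  have hx : stateBlock y = 0 := rfl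
  refine ⟨y, Function.curry_injective (funext fun t => ?_)⟩
  simp [curry_AeMat_mulVec, hu, hx, prevBlock, mulVec_mulVec,
    mul_nonsing_inv B ((isUnit_iff_isUnit_det B).mp hB)]

end NullSpace

theorem N_basis_of_ker_Ae_general (T nx : ℕ)
    (A B : Matrix (Fin nx) (Fin nx) ℝ) (hB : IsUnit B) :
    LinearMap.range (NMat T nx A B).mulVecLin = LinearMap.ker (AeMat T nx A B).mulVecLin ∧
    Module.finrank ℝ (LinearMap.ker (AeMat T nx A B).mulVecLin) = T * nx := by
  have hker : Module.finrank ℝ (LinearMap.ker (AeMat T nx A B).mulVecLin) = T * nx := by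
    have hrank := LinearMap.finrank_range_add_finrank_ker (AeMat T nx A B).mulVecLin
    rw [LinearMap.range_eq_top.mpr (AeMat_mulVec_surjective hB), finrank_top] at hrank
    simp only [Module.finrank_fintype_fun_eq_card, Fintype.card_prod, Fintype.card_fin] at hrank
    linarith
  refine ⟨Submodule.eq_of_le_of_finrank_eq ?_ ?_, hker⟩
  · rintro _ ⟨v, rfl⟩
    exact AeMat_mulVec_NMat_mulVec hB v
  · rw [LinearMap.finrank_range_of_inj (NMat_mulVec_injective hB), hker]
    simp

/-- The columns of `N` form a basis of the kernel of `A_e`: the column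
space of `N` equals the null space `{y : A_e y = 0}`, which has dimension `T·n_x`. -/
theorem N_basis_of_ker_Ae (T nx : ℕ) (hT : 1 ≤ T) (hnx : 1 ≤ nx)
    (A B : Matrix (Fin nx) (Fin nx) ℝ) (hB : IsUnit B) :
    LinearMap.range (NMat T nx A B).mulVecLin = LinearMap.ker (AeMat T nx A B).mulVecLin ∧
    Module.finrank ℝ (LinearMap.ker (AeMat T nx A B).mulVecLin) = T * nx :=
  N_basis_of_ker_Ae_general T nx A B hB
end

section
/- Block-wise Cholesky factorization of a block tridiagonal matrix: if Y ∈ ℝ^{Tm×Tm} is symmetric positive definite and block tridiagonal (its m×m blocks satisfy Y_{ij} = 0 whenever |i − j| ≥ 2), then there exists an invertible, entrywise lower triangular matrix L ∈ ℝ^{Tm×Tm} that is block lower bidiagonal (its m×m blocks satisfy L_{ij} = 0 unless j ≤ i ≤ j+1) such that Y = L L^T. -/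
/-!
Flattening the block index lexicographically, `Y` becomes an ordinary positive definite matrix,
so it has a Cholesky factor `L`, lower triangular with nonzero diagonal. Such a factor inherits
the zero profile of `L Lᵀ`: if row `i` of `L Lᵀ` vanishes in all columns `≤ j`, so does row `i`
of `L`, by induction on `j`, since `(L Lᵀ)ᵢⱼ = Lᵢⱼ Lⱼⱼ + ∑_{q < j} Lᵢ_q Lⱼ_q`. Row block `i` of a
block tridiagonal `Y` vanishes in all column blocks `≤ i - 2`, which gives block bidiagonality.
-/

open Matrix

namespace Matrix

variable {n R : Type*} [Fintype n] [LinearOrder n]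

theorem IsLowerTriangular.apply_self_ne_zero [DecidableEq n] [CommRing R] [Nontrivial R]
    {L : Matrix n n R} (hL : L.IsLowerTriangular) (hunit : IsUnit L) (j : n) : L j j ≠ 0 := by
  rw [isUnit_iff_isUnit_det, det_of_isLowerTriangular L hL] at hunit
  exact (isUnit_of_dvd_unit (Finset.dvd_prod_of_mem _ (Finset.mem_univ j)) hunit).ne_zero

theorem IsLowerTriangular.apply_eq_zero_of_mul_transpose [WellFoundedLT n] [CommSemiring R]
    [NoZeroDivisors R] {L : Matrix n n R} (hL : L.IsLowerTriangular) (hdiag : ∀ j, L j j ≠ 0)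
    {i j : n} (h : ∀ k ≤ j, (L * Lᵀ) i k = 0) : L i j = 0 := by
  induction j using WellFoundedLT.induction with
  | _ j ih =>
    have hsum : (L * Lᵀ) i j = L i j * L j j := by
      rw [mul_apply]
      refine Finset.sum_eq_single j (fun q _ hqj => ?_) (by simp)
      rcases hqj.lt_or_gt with hlt | hgt
      · rw [ih q hlt fun k hk => h k (hk.trans hlt.le), zero_mul]
      · rw [transpose_apply, hL hgt, mul_zero]
    have hij : L i j * L j j = 0 := hsum ▸ h j le_rfl
    exact (mul_eq_zero.mp hij).resolve_right (hdiag j)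

/-- **Cholesky decomposition**: `L = L' √D` for the LDL decomposition `S = L' D L'ᵀ`. -/
theorem PosDef.exists_isLowerTriangular_mul_transpose [WellFoundedLT n]
    [LocallyFiniteOrderBot n] {S : Matrix n n ℝ} (hS : S.PosDef) :
    ∃ L : Matrix n n ℝ, IsUnit L ∧ L.IsLowerTriangular ∧ S = L * Lᵀ := by
  have hD : (LDL.diag hS).PosDef := by
    rw [LDL.diag_eq_lowerInv_conj]
    exact hS.mul_mul_conjTranspose_same
      (vecMul_injective_iff_isUnit.mpr (isUnit_of_invertible _))
  have hd : ∀ i, 0 < LDL.diagEntries hS i := fun i => by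
    simpa [LDL.diag] using hD.diag_pos (i := i)
  set C := diagonal fun i => √(LDL.diagEntries hS i)
  have hCC : C * Cᵀ = LDL.diag hS := by
    rw [diagonal_transpose, diagonal_mul_diagonal, LDL.diag]
    exact congrArg diagonal (funext fun i => Real.mul_self_sqrt (hd i).le)
  have hlower : (LDL.lower hS).IsLowerTriangular :=
    blockTriangular_inv_of_blockTriangular fun _ _ => LDL.lowerInv_triangular hS
  refine ⟨LDL.lower hS * C, ?_, hlower.mul (blockTriangular_diagonal _), ?_⟩
  · refine (isUnit_nonsing_inv_iff.mpr (isUnit_of_invertible _)).mul (isUnit_diagonal.mpr ?_)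
    exact Pi.isUnit_iff.mpr fun i => (Real.sqrt_pos.mpr (hd i)).ne'.isUnit
  · conv_lhs => rw [← LDL.lower_conj_diag hS, conjTranspose_eq_transpose_of_trivial, ← hCC]
    simp only [transpose_mul, Matrix.mul_assoc]

end Matrix

theorem monotone_fst_finProdFinEquiv_symm {T m : ℕ} :
    Monotone fun k : Fin (T * m) => (finProdFinEquiv.symm k).1 := fun k l hkl => by
  simpa [Fin.le_def] using Nat.div_le_div_right (c := m) hkl

theorem finProdFinEquiv_lt_finProdFinEquiv_iff {T m : ℕ} {p q : Fin T × Fin m} :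
    finProdFinEquiv p < finProdFinEquiv q ↔ (p.1 : ℕ) * m + p.2 < q.1 * m + q.2 := by
  simp only [Fin.lt_def, finProdFinEquiv_apply_val]
  rw [mul_comm, mul_comm (m : ℕ)]
  omega

theorem block_tridiagonal_cholesky_general (T m : ℕ)
    (Y : Matrix (Fin T × Fin m) (Fin T × Fin m) ℝ)
    (hY : Y.PosDef)
    (hYtri : ∀ i j : Fin T × Fin m,
      ((i.1 : ℕ) + 2 ≤ (j.1 : ℕ) ∨ (j.1 : ℕ) + 2 ≤ (i.1 : ℕ)) → Y i j = 0) :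
    ∃ L : Matrix (Fin T × Fin m) (Fin T × Fin m) ℝ,
      IsUnit L ∧
      (∀ i j : Fin T × Fin m,
        (i.1 : ℕ) * m + (i.2 : ℕ) < (j.1 : ℕ) * m + (j.2 : ℕ) → L i j = 0) ∧
      (∀ i j : Fin T × Fin m,
        ¬((j.1 : ℕ) ≤ (i.1 : ℕ) ∧ (i.1 : ℕ) ≤ (j.1 : ℕ) + 1) → L i j = 0) ∧
      Y = L * Lᵀ := by
  obtain ⟨L, hunit, hlower, hfac⟩ :=
    (hY.submatrix finProdFinEquiv.symm.injective).exists_isLowerTriangular_mul_transpose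
  refine ⟨L.submatrix finProdFinEquiv finProdFinEquiv,
    by simpa [isUnit_iff_isUnit_det] using hunit,
    fun i j hij => hlower (finProdFinEquiv_lt_finProdFinEquiv_iff.mpr hij), fun i j hij => ?_, ?_⟩
  · rcases lt_or_ge (i.1 : ℕ) j.1 with hlt | hge
    · refine hlower (show finProdFinEquiv i < finProdFinEquiv j from
        monotone_fst_finProdFinEquiv_symm.reflect_lt ?_)
      simpa only [Equiv.symm_apply_apply, Fin.lt_def] using hlt
    · refine hlower.apply_eq_zero_of_mul_transpose (hlower.apply_self_ne_zero hunit) fun k hk => ?_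
      have hblock : (finProdFinEquiv.symm k).1 ≤ j.1 := by
        simpa only [Equiv.symm_apply_apply] using monotone_fst_finProdFinEquiv_symm hk
      rw [← hfac, submatrix_apply, Equiv.symm_apply_apply]
      exact hYtri _ _ (Or.inr (by rw [Fin.le_def] at hblock; omega))
  · rw [transpose_submatrix, submatrix_mul_equiv, ← hfac, submatrix_submatrix]
    simp

/-- Block-wise Cholesky factorization of a block tridiagonal matrix.
If `Y ∈ ℝ^{Tm×Tm}` is symmetric positive definite and block tridiagonal (its `m×m`
blocks satisfy `Y_{ij} = 0` whenever `|i − j| ≥ 2`), then there is an invertible,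
entrywise lower triangular `L ∈ ℝ^{Tm×Tm}` (entries ordered by the natural
lexicographic flattening `(i, a) ↦ i·m + a`) that is block lower bidiagonal
(`L_{ij} = 0` unless `j ≤ i ≤ j+1`) with `Y = L Lᵀ`. -/
theorem block_tridiagonal_cholesky (T m : ℕ) (hT : 1 ≤ T) (hm : 1 ≤ m)
    (Y : Matrix (Fin T × Fin m) (Fin T × Fin m) ℝ)
    (hY : Y.PosDef)
    (hYtri : ∀ i j : Fin T × Fin m,
      ((i.1 : ℕ) + 2 ≤ (j.1 : ℕ) ∨ (j.1 : ℕ) + 2 ≤ (i.1 : ℕ)) → Y i j = 0) :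
    ∃ L : Matrix (Fin T × Fin m) (Fin T × Fin m) ℝ,
      IsUnit L ∧
      (∀ i j : Fin T × Fin m,
        (i.1 : ℕ) * m + (i.2 : ℕ) < (j.1 : ℕ) * m + (j.2 : ℕ) → L i j = 0) ∧
      (∀ i j : Fin T × Fin m,
        ¬((j.1 : ℕ) ≤ (i.1 : ℕ) ∧ (i.1 : ℕ) ≤ (j.1 : ℕ) + 1) → L i j = 0) ∧
      Y = L * Lᵀ :=
  block_tridiagonal_cholesky_general T m Y hY hYtri
end

section
/- Sparse QR decomposition of the permuted equality-constraint block (case P₂): the matrix M equals Q'·R', where Q' := blockdiag(−Q_B, −Q_A, …, −Q_A) ∈ ℝ^{T·n_x×T·n_x} is orthogonal and R' ∈ ℝ^{T·n_x×T·n_x} is the block upper bidiagonal matrix with diagonal blocks (R_B, R_A, …, R_A) and superdiagonal blocks R'_{1,2} = −Q_B^T and R'_{t,t+1} = −Q_A^T for t ≥ 2; moreover R' is entrywise upper triangular and invertible, hence M is invertible. -/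
/-! Read as `T × T` arrays of `n_x × n_x` blocks (`Matrix.comp`), `Q'` is block diagonal and `R'`
block bidiagonal, so `Q' R'` is computed blockwise: `(−Q_B) R_B = −B̂`, `(−Q_A) R_A = −A` on the
diagonal and `(−Q)(−Qᵀ) = I` above it. Being block upper triangular, `R'` has as determinant the
product of the determinants of its invertible diagonal blocks, and it is entrywise upper
triangular because its diagonal blocks are and `(t, i) ↦ t n_x + i` is the lexicographic order. -/

open Matrix

/-- The permuted equality-constraint block `M ∈ ℝ^{T·n_x×T·n_x}` (case `P₂`), viewed
as a `T×T` array of `n_x×n_x` blocks: `M_{1,1} = −B̂`, `M_{t,t} = −A` for `t ≥ 2`,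
`M_{t,t+1} = I`, and all other blocks zero. -/
noncomputable def MMat (T nx : ℕ) (Bhat A : Matrix (Fin nx) (Fin nx) ℝ) :
    Matrix (Fin T × Fin nx) (Fin T × Fin nx) ℝ :=
  fun p q =>
    if p.1 = q.1 then (if (p.1 : ℕ) = 0 then (-Bhat) p.2 q.2 else (-A) p.2 q.2)
    else if (p.1 : ℕ) + 1 = (q.1 : ℕ) then (1 : Matrix (Fin nx) (Fin nx) ℝ) p.2 q.2
    else 0

/-- The orthogonal factor `Q' = blockdiag(−Q_B, −Q_A, …, −Q_A)`. -/
noncomputable def QMat (T nx : ℕ) (QB QA : Matrix (Fin nx) (Fin nx) ℝ) :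
    Matrix (Fin T × Fin nx) (Fin T × Fin nx) ℝ :=
  fun p q =>
    if p.1 = q.1 then (if (p.1 : ℕ) = 0 then (-QB) p.2 q.2 else (-QA) p.2 q.2)
    else 0

/-- The triangular factor `R'`: block upper bidiagonal with diagonal blocks
`(R_B, R_A, …, R_A)` and superdiagonal blocks `R'_{1,2} = −Q_Bᵀ`,
`R'_{t,t+1} = −Q_Aᵀ` for `t ≥ 2`. -/
noncomputable def RMat (T nx : ℕ) (QB QA RB RA : Matrix (Fin nx) (Fin nx) ℝ) :
    Matrix (Fin T × Fin nx) (Fin T × Fin nx) ℝ :=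
  fun p q =>
    if p.1 = q.1 then (if (p.1 : ℕ) = 0 then RB p.2 q.2 else RA p.2 q.2)
    else if (p.1 : ℕ) + 1 = (q.1 : ℕ) then
      (if (p.1 : ℕ) = 0 then (-QBᵀ) p.2 q.2 else (-QAᵀ) p.2 q.2)
    else 0

theorem Nat.lt_or_eq_and_lt_of_mul_add_lt_mul_add {n s t k i : ℕ} (hi : i < n)
    (h : s * n + k < t * n + i) : s < t ∨ (s = t ∧ k < i) := by
  rcases lt_trichotomy s t with hst | rfl | hts
  · exact Or.inl hst
  · exact Or.inr ⟨rfl, by omega⟩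
  · have : (t + 1) * n ≤ s * n := Nat.mul_le_mul_right n hts
    nlinarith

/-- The sequence `(X, Y, Y, …, Y)`. -/
def firstThen {T : ℕ} {S : Type*} (X Y : S) : Fin T → S :=
  fun t => if (t : ℕ) = 0 then X else Y

theorem firstThen_apply_induction {T : ℕ} {S : Type*} {p : S → Prop} {X Y : S} (hX : p X)
    (hY : p Y) (t : Fin T) : p (firstThen X Y t) := by
  unfold firstThen
  split_ifs
  exacts [hX, hY]

theorem firstThen_mul_firstThen {T : ℕ} {S : Type*} [Mul S] (X Y X' Y' : S) :
    (firstThen X Y : Fin T → S) * firstThen X' Y' = firstThen (X * X') (Y * Y') := by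
  ext t
  simp only [firstThen, Pi.mul_apply]
  split_ifs <;> rfl

theorem firstThen_self {T : ℕ} {S : Type*} (X : S) :
    (firstThen X X : Fin T → S) = fun _ => X := by
  ext t
  simp [firstThen]

namespace Matrix

section Bidiagonal

variable {T : ℕ} {S : Type*}

def bidiagonal [Zero S] (D U : Fin T → S) : Matrix (Fin T) (Fin T) S :=
  fun t s => if t = s then D t else if (t : ℕ) + 1 = s then U t else 0

@[simp]
theorem bidiagonal_apply_self [Zero S] (D U : Fin T → S) (t : Fin T) :
    bidiagonal D U t t = D t :=
  if_pos rfl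

theorem bidiagonal_isUpperTriangular [Zero S] (D U : Fin T → S) :
    (bidiagonal D U).IsUpperTriangular := fun t s (h : s < t) => by
  have : ¬ (t : ℕ) + 1 = s := by have := Fin.lt_def.mp h; omega
  simp [bidiagonal, h.ne', this]

theorem diagonal_mul_bidiagonal [NonUnitalNonAssocSemiring S] (d D U : Fin T → S) :
    diagonal d * bidiagonal D U = bidiagonal (d * D) (d * U) := by
  ext t s
  simp only [diagonal_mul, bidiagonal, Pi.mul_apply]
  split_ifs with h₁ h₂ <;> simp [h₁]

end Bidiagonal

section Comp

variable {I n R : Type*}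

theorem comp_diagonal_mul_transpose_eq_one [Fintype I] [Fintype n] [DecidableEq I]
    [DecidableEq n] [CommSemiring R] (d : I → Matrix n n R) (hd : ∀ t, d t * (d t)ᵀ = 1) :
    comp I I n n R (diagonal d) * (comp I I n n R (diagonal d))ᵀ = 1 := by
  rw [transpose_comp, diagonal_transpose, diagonal_map transpose_zero, ← compRingEquiv_apply,
    ← compRingEquiv_apply, ← map_mul, diagonal_mul_diagonal]
  simp [hd, diagonal_one, comp_one]

theorem blockTriangular_comp_fst [LT I] [Zero R] {B : Matrix I I (Matrix n n R)}
    (hB : B.IsUpperTriangular) : (comp I I n n R B).BlockTriangular Prod.fst := fun p q h => by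
  simp [hB h]

theorem det_comp_of_isUpperTriangular [Fintype I] [Fintype n] [LinearOrder I] [DecidableEq n]
    [CommRing R] {B : Matrix I I (Matrix n n R)} (hB : B.IsUpperTriangular) :
    (comp I I n n R B).det = ∏ t, (B t t).det := by
  rw [(blockTriangular_comp_fst hB).det_fintype]
  refine Finset.prod_congr rfl fun t _ => ?_
  let e : n ≃ {p : I × n // p.1 = t} :=
    ⟨fun j => ⟨(t, j), rfl⟩, fun p => p.1.2, fun _ => rfl,
      fun ⟨⟨_, _⟩, h⟩ => by subst h; rfl⟩
  have : (comp I I n n R B).toSquareBlock Prod.fst t = (B t t).submatrix e.symm e.symm := by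
    ext p q
    change B p.1.1 q.1.1 p.1.2 q.1.2 = B t t p.1.2 q.1.2
    rw [p.2, q.2]
  rw [this, det_submatrix_equiv_self]

theorem isUnit_comp_of_isUpperTriangular [Fintype I] [Fintype n] [LinearOrder I]
    [DecidableEq n] [CommRing R] {B : Matrix I I (Matrix n n R)} (hB : B.IsUpperTriangular)
    (hdiag : ∀ t, IsUnit (B t t)) : IsUnit (comp I I n n R B) := by
  rw [isUnit_iff_isUnit_det, det_comp_of_isUpperTriangular hB, IsUnit.prod_univ_iff]
  exact fun t => (isUnit_iff_isUnit_det _).mp (hdiag t)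

theorem blockTriangular_comp_flatten {T m : ℕ} [Zero R]
    {B : Matrix (Fin T) (Fin T) (Matrix (Fin m) (Fin m) R)}
    (hB : B.IsUpperTriangular) (hdiag : ∀ t, (B t t).IsUpperTriangular) :
    (comp _ _ _ _ R B).BlockTriangular (fun p : Fin T × Fin m => (p.1 : ℕ) * m + p.2) := by
  rintro ⟨t, i⟩ ⟨s, k⟩ h
  rcases Nat.lt_or_eq_and_lt_of_mul_add_lt_mul_add i.isLt h with hst | ⟨hst, hki⟩
  · exact congrFun (congrFun (hB hst) i) k
  · obtain rfl := Fin.ext hst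
    exact hdiag s hki

end Comp

end Matrix

theorem MMat_eq_comp (T nx : ℕ) (Bhat A : Matrix (Fin nx) (Fin nx) ℝ) :
    MMat T nx Bhat A = comp _ _ _ _ _ (bidiagonal (firstThen (-Bhat) (-A)) 1) := by
  ext p q
  simp only [MMat, comp_apply, bidiagonal, firstThen, Pi.one_apply]
  split_ifs <;> rfl

theorem QMat_eq_comp (T nx : ℕ) (QB QA : Matrix (Fin nx) (Fin nx) ℝ) :
    QMat T nx QB QA = comp _ _ _ _ _ (diagonal (firstThen (-QB) (-QA))) := by
  ext p q
  simp only [QMat, comp_apply, diagonal_apply, firstThen]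
  split_ifs <;> rfl

theorem RMat_eq_comp (T nx : ℕ) (QB QA RB RA : Matrix (Fin nx) (Fin nx) ℝ) :
    RMat T nx QB QA RB RA =
      comp _ _ _ _ _ (bidiagonal (firstThen RB RA) (firstThen (-QBᵀ) (-QAᵀ))) := by
  ext p q
  simp only [RMat, comp_apply, bidiagonal, firstThen]
  split_ifs <;> rfl

theorem sparse_qr_case_P2_general (T nx : ℕ)
    (Bhat A QB QA RB RA : Matrix (Fin nx) (Fin nx) ℝ)
    (hQB₁ : QB * QBᵀ = 1)
    (hQA₁ : QA * QAᵀ = 1)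
    (hRB : RB.BlockTriangular id) (hRBunit : IsUnit RB)
    (hRA : RA.BlockTriangular id) (hRAunit : IsUnit RA)
    (hBhat : Bhat = QB * RB) (hA : A = QA * RA) :
    MMat T nx Bhat A = QMat T nx QB QA * RMat T nx QB QA RB RA ∧
      (QMat T nx QB QA * (QMat T nx QB QA)ᵀ = 1 ∧
        (QMat T nx QB QA)ᵀ * QMat T nx QB QA = 1) ∧
      (RMat T nx QB QA RB RA).BlockTriangular
        (fun p : Fin T × Fin nx => (p.1 : ℕ) * nx + (p.2 : ℕ)) ∧
      IsUnit (RMat T nx QB QA RB RA) ∧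
      IsUnit (MMat T nx Bhat A) := by
  set d : Fin T → Matrix (Fin nx) (Fin nx) ℝ := firstThen (-QB) (-QA)
  have hd : ∀ t, d t * (d t)ᵀ = 1 :=
    firstThen_apply_induction (p := fun X => X * Xᵀ = 1) (by simpa) (by simpa)
  have hRupper :=
    bidiagonal_isUpperTriangular (T := T) (firstThen RB RA) (firstThen (-QBᵀ) (-QAᵀ))
  have hQR : MMat T nx Bhat A = QMat T nx QB QA * RMat T nx QB QA RB RA := by
    rw [MMat_eq_comp, QMat_eq_comp, RMat_eq_comp, ← compRingEquiv_apply, ← compRingEquiv_apply,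
      ← compRingEquiv_apply, ← map_mul, diagonal_mul_bidiagonal, firstThen_mul_firstThen,
      firstThen_mul_firstThen, neg_mul_neg, neg_mul_neg, hQB₁, hQA₁, firstThen_self, hBhat, hA,
      neg_mul, neg_mul]
    rfl
  have hQ : QMat T nx QB QA * (QMat T nx QB QA)ᵀ = 1 := by
    rw [QMat_eq_comp]
    exact comp_diagonal_mul_transpose_eq_one d hd
  have hRunit : IsUnit (RMat T nx QB QA RB RA) := by
    rw [RMat_eq_comp]
    exact isUnit_comp_of_isUpperTriangular hRupper fun t => by
      simpa using firstThen_apply_induction hRBunit hRAunit t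
  have hRflat : (RMat T nx QB QA RB RA).BlockTriangular
      (fun p : Fin T × Fin nx => (p.1 : ℕ) * nx + (p.2 : ℕ)) := by
    rw [RMat_eq_comp]
    exact blockTriangular_comp_flatten hRupper fun t => by
      simpa using firstThen_apply_induction (p := IsUpperTriangular) hRB hRA t
  have hQunit : IsUnit (QMat T nx QB QA) := .of_mul_eq_one _ hQ
  exact ⟨hQR, ⟨hQ, mul_eq_one_comm.mp hQ⟩, hRflat, hRunit, hQR ▸ hQunit.mul hRunit⟩

/-- Sparse QR decomposition of the permuted equality-constraint block
(case `P₂`): with QR factorizations `B̂ = Q_B R_B` and `A = Q_A R_A` (`Q_B, Q_A`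
orthogonal, `R_B, R_A` upper triangular and invertible), the matrix `M` equals
`Q' · R'` where `Q'` is orthogonal and `R'` is entrywise upper triangular (w.r.t.
the flattened ordering `(t, i) ↦ t·n_x + i`) and invertible; hence `M` is
invertible. -/
theorem sparse_qr_case_P2 (T nx : ℕ) (hT : 1 ≤ T) (hnx : 1 ≤ nx)
    (Bhat A QB QA RB RA : Matrix (Fin nx) (Fin nx) ℝ)
    (hQB₁ : QB * QBᵀ = 1) (hQB₂ : QBᵀ * QB = 1)
    (hQA₁ : QA * QAᵀ = 1) (hQA₂ : QAᵀ * QA = 1)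
    (hRB : RB.BlockTriangular id) (hRBunit : IsUnit RB)
    (hRA : RA.BlockTriangular id) (hRAunit : IsUnit RA)
    (hBhat : Bhat = QB * RB) (hA : A = QA * RA) :
    MMat T nx Bhat A = QMat T nx QB QA * RMat T nx QB QA RB RA ∧
      (QMat T nx QB QA * (QMat T nx QB QA)ᵀ = 1 ∧
        (QMat T nx QB QA)ᵀ * QMat T nx QB QA = 1) ∧
      (RMat T nx QB QA RB RA).BlockTriangular
        (fun p : Fin T × Fin nx => (p.1 : ℕ) * nx + (p.2 : ℕ)) ∧
      IsUnit (RMat T nx QB QA RB RA) ∧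
      IsUnit (MMat T nx Bhat A) :=
  sparse_qr_case_P2_general T nx Bhat A QB QA RB RA hQB₁ hQA₁ hRB hRBunit hRA hRAunit hBhat hA
end
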